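/- For nonzero x in (ℚ/ℤ) prime to p, the Kubert V function satisfies V(x) + V(−x) = 1, where V(y/(p^f−1)) = [y]_{p,f,-}/(f(p−1)) with [y]_{p,f,-} the base-p digit sum of the representative of y mod p^f−1 in [0, p^f−2]. -/

import Mathlib

/-- Base-`p` digit sum. -/
def digitSum (p n : ℕ) : ℕ := (Nat.digits p n).sum

/-- Digit sum of the representative of `y` modulo `m` lying in `[0, m-1]`. -/
def repDigitSumNonneg (p m : ℕ) (y : ℤ) : ℕ := digitSum p (y % (m : ℤ)).toNat

/-- The Kubert `V` function evaluated at `y/(p^f - 1)`. -/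
noncomputable def kubertV (p f : ℕ) (y : ℤ) : ℚ :=
  (repDigitSumNonneg p (p ^ f - 1) y : ℚ) / (f * ((p : ℚ) - 1))

/-! If `r ∈ [0, p^f - 2]` represents `y`, then `p^f - 1 - r` represents `-y`, and its `f` base-`p`
digits (with leading zeros) are the complements `p - 1 - d` of those of `r`; hence the two digit
sums add up to `f (p - 1)`. For well-definedness, rewrite both fractions over `p^{fg} - 1`:
multiplying `y` by `1 + p^f + ⋯ + p^{f(g-1)}` repeats its block of `f` digits `g` times, which
multiplies the digit sum and the normalisation `f (p - 1)` by the same factor `g`. -/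

open Finset

section DigitSum

variable {p : ℕ}

theorem digitSum_add_pow_mul (hp : 1 < p) {k a : ℕ} (ha : a < p ^ k) (b : ℕ) :
    digitSum p (a + p ^ k * b) = digitSum p a + digitSum p b := by
  rcases b.eq_zero_or_pos with rfl | hb
  · simp [digitSum]
  have hlen : (p.digits a).length ≤ k := (Nat.digits_length_le_iff hp a).2 ha
  rw [digitSum, ← Nat.add_sub_cancel' hlen, ← Nat.digits_append_zeroes_append_digits hp hb]
  simp [digitSum]

theorem digitSum_add_mul (hp : 1 < p) {a : ℕ} (ha : a < p) (b : ℕ) :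
    digitSum p (a + p * b) = a + digitSum p b := by
  rw [show a + p * b = a + p ^ 1 * b by rw [pow_one], digitSum_add_pow_mul hp (by rwa [pow_one])]
  rcases a.eq_zero_or_pos with rfl | ha0
  · simp [digitSum]
  · simp [digitSum, Nat.digits_of_lt p a ha0.ne' ha]

theorem digitSum_mul_geom_sum (hp : 1 < p) {k r : ℕ} (hr : r < p ^ k) (g : ℕ) :
    digitSum p (r * ∑ i ∈ range g, (p ^ k) ^ i) = g * digitSum p r := by
  induction g with
  | zero => simp [digitSum]
  | succ g ih =>
    rw [geom_sum_succ, mul_add_one, mul_left_comm, add_comm, digitSum_add_pow_mul hp hr, ih]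
    ring

theorem digitSum_add_digitSum_pow_sub_one_sub (hp : 1 < p) {f r : ℕ} (hr : r < p ^ f) :
    digitSum p r + digitSum p (p ^ f - 1 - r) = f * (p - 1) := by
  induction f generalizing r with
  | zero => simp_all [digitSum]
  | succ f ih =>
    have hq : r / p < p ^ f := Nat.div_lt_of_lt_mul (by rwa [← pow_succ'])
    have hs : r % p < p := Nat.mod_lt r (by omega)
    have hpf : 1 ≤ p ^ f := Nat.one_le_pow _ _ (by omega)
    have hcompl : p ^ (f + 1) - 1 - r = (p - 1 - r % p) + p * (p ^ f - 1 - r / p) := by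
      have hdiv := Nat.mod_add_div r p
      have : 1 ≤ p ^ (f + 1) := Nat.one_le_pow _ _ (by omega)
      zify [this, hpf, hp.le, (by omega : r ≤ p ^ (f + 1) - 1), (by omega : r / p ≤ p ^ f - 1),
        (by omega : r % p ≤ p - 1)] at hdiv ⊢
      linear_combination hdiv
    have hih := ih hq
    rw [hcompl, digitSum_add_mul hp (by omega), ← Nat.mod_add_div r p, digitSum_add_mul hp hs,
      Nat.mod_add_div, add_one_mul]
    omega

end DigitSum

theorem natCast_pow_sub_one {p : ℕ} (hp : 0 < p) (f : ℕ) :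
    ((p ^ f - 1 : ℕ) : ℤ) = (p : ℤ) ^ f - 1 := by
  rw [Nat.cast_pred (by positivity), Nat.cast_pow]

theorem intCast_pow_sub_one_mul_geom_sum (p f g : ℕ) :
    ((p : ℤ) ^ f - 1) * ↑(∑ i ∈ range g, (p ^ f) ^ i) = (p : ℤ) ^ (f * g) - 1 := by
  push_cast
  rw [mul_geom_sum, pow_mul]

theorem Int.modEq_of_div_sub_div_eq_intCast {A B a b y z m : ℤ} (hA : A ≠ 0) (hB : B ≠ 0)
    (hab : A * a = B * b) (h : (y : ℚ) / A - z / B = m) : y * a ≡ z * b [ZMOD A * a] := by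
  refine Int.modEq_iff_dvd.2 ⟨-m, ?_⟩
  have hab' : (A : ℚ) * a = B * b := by exact_mod_cast hab
  qify
  rw [← h]
  field_simp
  linear_combination -(z : ℚ) * hab'

section Kubert

variable {p f : ℕ}

theorem repDigitSumNonneg_congr {m : ℕ} {y z : ℤ} (h : y ≡ z [ZMOD m]) :
    repDigitSumNonneg p m y = repDigitSumNonneg p m z := by
  rw [repDigitSumNonneg, repDigitSumNonneg, h.eq]

theorem repDigitSumNonneg_mul_geom_sum (hp : 1 < p) (hf : 0 < f) {g : ℕ} (hg : 0 < g) (y : ℤ) :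
    repDigitSumNonneg p (p ^ (f * g) - 1) (y * ↑(∑ i ∈ range g, (p ^ f) ^ i)) =
      g * repDigitSumNonneg p (p ^ f - 1) y := by
  have hp0 : 0 < p := by omega
  have hM : (0 : ℤ) < ((p ^ f - 1 : ℕ) : ℤ) := by
    exact_mod_cast Nat.sub_pos_of_lt (Nat.one_lt_pow hf.ne' hp)
  have hG : (0 : ℤ) < ↑(∑ i ∈ range g, (p ^ f) ^ i) := by
    exact_mod_cast Finset.sum_pos (fun i _ => by positivity) (nonempty_range_iff.2 hg.ne')
  have hr : (y % ((p ^ f - 1 : ℕ) : ℤ)).toNat < p ^ f := by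
    have := Int.emod_lt_of_pos y hM
    omega
  have hmod : ((p ^ (f * g) - 1 : ℕ) : ℤ) =
      ↑(∑ i ∈ range g, (p ^ f) ^ i) * ((p ^ f - 1 : ℕ) : ℤ) := by
    rw [natCast_pow_sub_one hp0, natCast_pow_sub_one hp0, ← intCast_pow_sub_one_mul_geom_sum,
      mul_comm]
  rw [repDigitSumNonneg, repDigitSumNonneg, hmod, mul_comm y, Int.mul_emod_mul_of_pos _ _ hG,
    Int.toNat_mul hG.le (Int.emod_nonneg _ hM.ne'), Int.toNat_natCast, mul_comm,
    digitSum_mul_geom_sum hp hr]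

theorem repDigitSumNonneg_add_neg (hp : 1 < p) (hf : 0 < f) {y : ℤ}
    (hy : ¬ ((p ^ f - 1 : ℕ) : ℤ) ∣ y) :
    repDigitSumNonneg p (p ^ f - 1) y + repDigitSumNonneg p (p ^ f - 1) (-y) = f * (p - 1) := by
  have hM : (0 : ℤ) < ((p ^ f - 1 : ℕ) : ℤ) := by
    exact_mod_cast Nat.sub_pos_of_lt (Nat.one_lt_pow hf.ne' hp)
  set r := (y % ((p ^ f - 1 : ℕ) : ℤ)).toNat with hr_def
  have hr : (r : ℤ) = y % ((p ^ f - 1 : ℕ) : ℤ) := Int.toNat_of_nonneg (Int.emod_nonneg _ hM.ne')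
  have hrM : r < p ^ f - 1 := by
    have := Int.emod_lt_of_pos y hM
    omega
  have hneg : (-y) % ((p ^ f - 1 : ℕ) : ℤ) = ((p ^ f - 1 - r : ℕ) : ℤ) := by
    rw [Int.neg_emod, if_neg hy, Int.natAbs_natCast, ← hr, Nat.cast_sub hrM.le]
  rw [repDigitSumNonneg, repDigitSumNonneg, ← hr_def, hneg, Int.toNat_natCast,
    digitSum_add_digitSum_pow_sub_one_sub hp (by omega)]

theorem kubertV_congr (hp : 0 < p) {y z : ℤ} (h : y ≡ z [ZMOD (p : ℤ) ^ f - 1]) :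
    kubertV p f y = kubertV p f z := by
  rw [← natCast_pow_sub_one hp] at h
  rw [kubertV, kubertV, repDigitSumNonneg_congr h]

theorem kubertV_mul_geom_sum (hp : 1 < p) (hf : 0 < f) {g : ℕ} (hg : 0 < g) (y : ℤ) :
    kubertV p (f * g) (y * ↑(∑ i ∈ range g, (p ^ f) ^ i)) = kubertV p f y := by
  have hg' : (g : ℚ) ≠ 0 := by positivity
  rw [kubertV, kubertV, repDigitSumNonneg_mul_geom_sum hp hf hg, Nat.cast_mul, Nat.cast_mul,
    mul_comm (f : ℚ), mul_assoc, mul_div_mul_left _ _ hg']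

theorem kubertV_add_kubertV_neg (hp : 1 < p) (hf : 0 < f) {y : ℤ}
    (hy : ¬ (p : ℤ) ^ f - 1 ∣ y) : kubertV p f y + kubertV p f (-y) = 1 := by
  rw [← natCast_pow_sub_one (by omega)] at hy
  have hp' : (1 : ℚ) < p := by exact_mod_cast hp
  rw [kubertV, kubertV, ← add_div, ← Nat.cast_add, repDigitSumNonneg_add_neg hp hf hy,
    Nat.cast_mul, Nat.cast_sub hp.le, Nat.cast_one]
  exact div_self (mul_ne_zero (by positivity) (by linarith))

end Kubert

theorem kubertV_well_defined_and_complement (p : ℕ) (hp : p.Prime) :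
    (∀ f g : ℕ, 0 < f → 0 < g → ∀ y z : ℤ,
        (∃ m : ℤ, (y : ℚ) / ((p : ℚ) ^ f - 1) - (z : ℚ) / ((p : ℚ) ^ g - 1) = m) →
        kubertV p f y = kubertV p g z) ∧
    (∀ f : ℕ, 0 < f → ∀ y : ℤ, ¬ ((p : ℤ) ^ f - 1 ∣ y) →
        kubertV p f y + kubertV p f (-y) = 1) := by
  have hp1 := hp.one_lt
  refine ⟨fun f g hf hg y z ⟨m, hm⟩ => ?_, fun f hf y hy => kubertV_add_kubertV_neg hp1 hf hy⟩
  have hpow_ne {k : ℕ} (hk : 0 < k) : (p : ℤ) ^ k - 1 ≠ 0 :=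
    sub_ne_zero.2 (one_lt_pow₀ (by exact_mod_cast hp1) hk.ne').ne'
  have hcommon : y * ↑(∑ i ∈ range g, (p ^ f) ^ i) ≡ z * ↑(∑ i ∈ range f, (p ^ g) ^ i)
      [ZMOD (p : ℤ) ^ (f * g) - 1] := by
    rw [← intCast_pow_sub_one_mul_geom_sum p f g]
    refine Int.modEq_of_div_sub_div_eq_intCast (hpow_ne hf) (hpow_ne hg) ?_ (by exact_mod_cast hm)
    rw [intCast_pow_sub_one_mul_geom_sum, intCast_pow_sub_one_mul_geom_sum, mul_comm g]
  calc kubertV p f y = kubertV p (f * g) (y * ↑(∑ i ∈ range g, (p ^ f) ^ i)) :=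
        (kubertV_mul_geom_sum hp1 hf hg y).symm
    _ = kubertV p (g * f) (z * ↑(∑ i ∈ range f, (p ^ g) ^ i)) := by
        rw [mul_comm g]; exact kubertV_congr hp.pos hcommon
    _ = kubertV p g z := kubertV_mul_geom_sum hp1 hg hf z
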